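/- arXiv:2505.13806 — 4 statements merged into one kernel-verified Lean document; each statement's English description precedes it below -/
import Mathlib

section
/- The one-color five-vertex model satisfies the Yang-Baxter equation: for any boundary data i₁,i₂,i₃,j₁,j₂,j₃ ∈ {0,1}, the sum over internal edge states of R_{y/x}(i₁,i₂;a,b)·L_x(b,i₃;j₁,c)·L_y(a,c;d,j₃) with internal edges a,b,c,d matched appropriately equals the corresponding sum with the cross on the right side, where L_x assigns weight x to a vertex iff the path exits to the right (the five allowed configurations being empty, SE-turn, horizontal, vertical, NW-turn with weights 1, x, x, 1, 1) and the cross weights R_z are 1-z (path crossing top-left to bottom-right), z (both paths bounce: top pair), 1 (both paths bounce: bottom pair), z (two paths crossing), 1 (empty). -/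
/-- Weight of a white five-vertex configuration with edge occupancies
(bottom, left, top, right): the five allowed configurations are
empty (1), bottom→right (x), left→right (x), bottom→top (1), left→top (1);
all other configurations are forbidden (weight 0). -/
def Lw (x : ℚ) (b l t r : Bool) : ℚ :=
  match b, l, t, r with
  | false, false, false, false => 1
  | true,  false, false, true  => x
  | false, true,  false, true  => x
  | true,  false, true,  false => 1
  | false, true,  true,  false => 1
  | _, _, _, _ => 0

/-- Weight of a cross vertex with edge occupancies
(top-left in, bottom-left in, top-right out, bottom-right out): the five allowed
configurations are a path crossing from top-left to bottom-right (1-z), a path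
bouncing along the top (z), a path bouncing along the bottom (1), two crossing
paths (z), and the empty cross (1); all others are forbidden (weight 0). -/
def Rw (z : ℚ) (i₁ i₂ o₁ o₂ : Bool) : ℚ :=
  match i₁, i₂, o₁, o₂ with
  | true,  false, false, true  => 1 - z
  | true,  false, true,  false => z
  | false, true,  false, true  => 1
  | true,  true,  true,  true  => z
  | false, false, false, false => 1
  | _, _, _, _ => 0

/- Stated with `z` in place of `y / x`, so that no division occurs: eliminating `y` turns each of
the 64 boundary conditions into a polynomial identity in `x` and `z`. -/
theorem five_vertex_yang_baxter_of_mul_eq (x z y : ℚ) (h : x * z = y)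
    (i₁ i₂ i₃ j₁ j₂ j₃ : Bool) :
    (∑ a : Bool, ∑ b : Bool, ∑ c : Bool,
        Rw z i₁ i₂ a b * Lw x i₃ b c j₁ * Lw y c a j₃ j₂) =
      ∑ a : Bool, ∑ b : Bool, ∑ c : Bool,
        Lw y i₃ i₂ c b * Lw x c i₁ j₃ a * Rw z a b j₂ j₁ := by
  subst h
  cases i₁ <;> cases i₂ <;> cases i₃ <;> cases j₁ <;> cases j₂ <;> cases j₃ <;>
    simp only [Fintype.sum_bool, Lw, Rw] <;> ring

/-- The Yang–Baxter equation for the one-color five-vertex model: for all boundary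
data i₁,i₂,i₃,j₁,j₂,j₃, the partition function of the diagram with the cross
(spectral parameter y/x) on the left of the two-vertex column equals that of the
diagram with the cross on the right. -/
theorem five_vertex_yang_baxter (x y : ℚ) (hx : x ≠ 0)
    (i₁ i₂ i₃ j₁ j₂ j₃ : Bool) :
    (∑ a : Bool, ∑ b : Bool, ∑ c : Bool,
        Rw (y / x) i₁ i₂ a b * Lw x i₃ b c j₁ * Lw y c a j₃ j₂) =
      ∑ a : Bool, ∑ b : Bool, ∑ c : Bool,
        Lw y i₃ i₂ c b * Lw x c i₁ j₃ a * Rw (y / x) a b j₂ j₁ :=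
  five_vertex_yang_baxter_of_mul_eq x (y / x) y (mul_div_cancel₀ y hx) i₁ i₂ i₃ j₁ j₂ j₃
end

section
/- For the single-row transfer matrix of the white five-vertex model: given partitions μ ⪯ λ, there is exactly one configuration of a row with bottom boundary the Maya diagram of μ, top boundary the Maya diagram of λ, and no paths entering or exiting on the sides, and its weight is x^{|λ|-|μ|}; if μ does not interlace λ there is no valid configuration. -/
/-- An integer partition: a weakly decreasing, eventually-zero sequence of
nonnegative integers (0-indexed: `part i` is the (i+1)-st part). -/
structure IntPartition where
  part : ℕ → ℕ
  antitone : ∀ ⦃i j : ℕ⦄, i ≤ j → part j ≤ part i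
  eventually_zero : ∃ N, ∀ i, N ≤ i → part i = 0

/-- The conjugate partition: `conj j` = number of parts strictly larger than `j`,
i.e. the length of the (j+1)-st column (1-indexed λ'_{j+1}). -/
noncomputable def IntPartition.conj (P : IntPartition) (j : ℕ) : ℕ :=
  Nat.card {i : ℕ // j < P.part i}

/-- The size |λ| of a partition. -/
noncomputable def IntPartition.size (P : IntPartition) : ℕ := ∑ᶠ i, P.part i

/-- μ ⪯ λ : the interlacing relation λ₁ ≥ μ₁ ≥ λ₂ ≥ μ₂ ≥ ... -/
def Interlace (μ lam : IntPartition) : Prop :=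
  ∀ i, μ.part i ≤ lam.part i ∧ lam.part (i + 1) ≤ μ.part i

/-- Hook length of the (0-indexed) cell (i,j), valid when `j < P.part i`:
arm + leg + 1 = (λ_i - j - 1) + (λ'_j - i - 1) + 1. -/
noncomputable def IntPartition.hook (P : IntPartition) (i j : ℕ) : ℕ :=
  (P.part i - j) + (P.conj j - i) - 1


/-- The Maya diagram of a partition: there is a particle at position p iff
p = λ_i - i for some i ≥ 1 (0-indexed: `part m - m - 1`); the center of the
diagram is at position 0. -/
def mayaParticle (P : IntPartition) (p : ℤ) : Prop :=
  ∃ m : ℕ, p = (P.part m : ℤ) - m - 1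

/-- The five allowed white-vertex configurations, in terms of the occupancies of the
(bottom, left, top, right) edges: empty, bottom→right, left→right, bottom→top,
left→top. -/
def okWhite (b l t r : Prop) : Prop :=
  (¬b ∧ ¬l ∧ ¬t ∧ ¬r) ∨ (b ∧ ¬l ∧ ¬t ∧ r) ∨ (¬b ∧ l ∧ ¬t ∧ r) ∨
    (b ∧ ¬l ∧ t ∧ ¬r) ∨ (¬b ∧ l ∧ t ∧ ¬r)

/-- A configuration of a single bi-infinite white row with bottom boundary the Maya
diagram of μ and top boundary the Maya diagram of λ, and no paths entering or
exiting on the sides. `h p` is the occupancy of the horizontal edge on the left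
side of the vertex in column p; the side condition is that only finitely many
horizontal edges are occupied. -/
structure WhiteRowConfig (μ lam : IntPartition) where
  h : ℤ → Prop
  sides : {p : ℤ | h p}.Finite
  compat : ∀ p : ℤ, okWhite (mayaParticle μ p) (h p) (mayaParticle lam p) (h (p + 1))

open Classical

namespace WhiteRowAux

def pos (P : IntPartition) (m : ℕ) : ℤ := (P.part m : ℤ) - m - 1

lemma pos_le {P : IntPartition} {m n : ℕ} (h : m ≤ n) : pos P n ≤ pos P m := by
  have h1 : P.part n ≤ P.part m := P.antitone h
  unfold pos
  have : (P.part n : ℤ) ≤ (P.part m : ℤ) := by exact_mod_cast h1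
  omega

lemma pos_lt {P : IntPartition} {m n : ℕ} (h : m < n) : pos P n < pos P m := by
  have h1 : P.part n ≤ P.part m := P.antitone h.le
  unfold pos
  have : (P.part n : ℤ) ≤ (P.part m : ℤ) := by exact_mod_cast h1
  have : (m : ℤ) < n := by exact_mod_cast h
  omega

lemma maya_iff {P : IntPartition} {p : ℤ} : mayaParticle P p ↔ ∃ m, p = pos P m := Iff.rfl

lemma cnt_finite (P : IntPartition) (p : ℤ) : {m : ℕ | p ≤ pos P m}.Finite := by
  apply Set.Finite.subset (Set.finite_Iio ((P.part 0 : ℤ) - p + 1).toNat)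
  intro m hm
  simp only [Set.mem_setOf_eq] at hm
  have h1 : P.part m ≤ P.part 0 := P.antitone (Nat.zero_le m)
  unfold pos at hm
  simp only [Set.mem_Iio]
  have h2 : (P.part m : ℤ) ≤ (P.part 0 : ℤ) := by exact_mod_cast h1
  omega

noncomputable def cnt (P : IntPartition) (p : ℤ) : ℕ := Set.ncard {m : ℕ | p ≤ pos P m}

lemma lt_cnt_iff {P : IntPartition} {p : ℤ} {k : ℕ} : k < cnt P p ↔ p ≤ pos P k := by
  constructor
  · intro hk
    by_contra hle
    push_neg at hle
    have hsub : {m : ℕ | p ≤ pos P m} ⊆ Set.Iio k := by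
      intro j hj
      simp only [Set.mem_setOf_eq] at hj
      simp only [Set.mem_Iio]
      by_contra hjk
      push_neg at hjk
      exact absurd hj (not_le.2 (lt_of_le_of_lt (pos_le hjk) hle))
    have hle2 := Set.ncard_le_ncard hsub (Set.finite_Iio k)
    rw [show Set.Iio k = ↑(Finset.Iio k) by simp, Set.ncard_coe_finset,
      Nat.card_Iio] at hle2
    unfold cnt at hk
    omega
  · intro hp
    have hsub : Set.Iic k ⊆ {m : ℕ | p ≤ pos P m} := by
      intro j hj
      simp only [Set.mem_Iic] at hj
      exact le_trans hp (pos_le hj)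
    have hle2 := Set.ncard_le_ncard hsub (cnt_finite P p)
    rw [show Set.Iic k = ↑(Finset.Iic k) by simp, Set.ncard_coe_finset,
      Nat.card_Iic] at hle2
    unfold cnt
    omega

lemma cnt_mono (P : IntPartition) (p : ℤ) : cnt P (p + 1) ≤ cnt P p := by
  by_contra h
  push_neg at h
  have h1 : (cnt P p) < cnt P (p+1) := h
  have := lt_cnt_iff.1 h1
  have h2 : ¬ (cnt P p < cnt P p) := lt_irrefl _
  rw [lt_cnt_iff] at h2
  omega

lemma cnt_le_succ (P : IntPartition) (p : ℤ) : cnt P p ≤ cnt P (p + 1) + 1 := by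
  by_contra h
  push_neg at h
  set k := cnt P (p + 1) with hk
  have h1 : k < cnt P p := by omega
  have h2 : k + 1 < cnt P p := by omega
  have e1 : p ≤ pos P k := lt_cnt_iff.1 h1
  have e2 : p ≤ pos P (k + 1) := lt_cnt_iff.1 h2
  have e3 : ¬ (p + 1 ≤ pos P k) := by
    rw [← lt_cnt_iff]; omega
  have := pos_lt (P := P) (show k < k + 1 by omega)
  omega

lemma cnt_step (P : IntPartition) (p : ℤ) :
    cnt P p = cnt P (p + 1) + (if mayaParticle P p then 1 else 0) := by
  have hm := cnt_mono P p
  have hs := cnt_le_succ P p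
  by_cases hb : mayaParticle P p
  · obtain ⟨m, hmm⟩ := hb
    rw [if_pos ⟨m, hmm⟩]
    have h1 : m < cnt P p := lt_cnt_iff.2 (le_of_eq hmm)
    have h2 : ¬ (m < cnt P (p + 1)) := by
      rw [lt_cnt_iff]
      rw [show pos P m = p from hmm.symm]
      omega
    omega
  · rw [if_neg hb]
    by_contra h
    have h1 : cnt P (p + 1) < cnt P p := by omega
    set k := cnt P (p + 1)
    have e1 : p ≤ pos P k := lt_cnt_iff.1 h1
    have e3 : ¬ (p + 1 ≤ pos P k) := by rw [← lt_cnt_iff]; omega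
    exact hb ⟨k, by unfold pos at e1 e3; omega⟩

lemma cnt_eq_zero {P : IntPartition} {p : ℤ} (h : pos P 0 < p) : cnt P p = 0 := by
  by_contra hc
  have : 0 < cnt P p := Nat.pos_of_ne_zero hc
  have := lt_cnt_iff.1 this
  omega

lemma okWhite_not_bl {b l t r : Prop} (h : okWhite b l t r) : ¬(b ∧ l) := by
  unfold okWhite at h; tauto

lemma okWhite_r_iff {b l t r : Prop} (h : okWhite b l t r) : r ↔ ((b ∨ l) ∧ ¬t) := by
  unfold okWhite at h; tauto

variable {μ lam : IntPartition}

lemma h_unique (C C' : WhiteRowConfig μ lam) : C.h = C'.h := by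
  obtain ⟨b0, hb0⟩ := (C.sides.union C'.sides).bddBelow
  have hlow : ∀ p : ℤ, p < b0 → ¬ C.h p ∧ ¬ C'.h p := by
    intro p hp
    constructor
    · intro hh
      exact absurd (hb0 (Set.mem_union_left _ hh)) (not_le.2 hp)
    · intro hh
      exact absurd (hb0 (Set.mem_union_right _ hh)) (not_le.2 hp)
  have key : ∀ n : ℕ, (C.h (b0 - 1 + n) ↔ C'.h (b0 - 1 + n)) := by
    intro n
    induction n with
    | zero =>
      have h1 := hlow (b0 - 1 + (0:ℕ)) (by simp)
      tauto
    | succ n ih =>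
      have e : b0 - 1 + ((n : ℤ) + 1) = (b0 - 1 + n) + 1 := by ring
      push_cast
      rw [e]
      rw [okWhite_r_iff (C.compat (b0 - 1 + n)), okWhite_r_iff (C'.compat (b0 - 1 + n))]
      rw [ih]
  funext p
  apply propext
  rcases lt_or_ge p b0 with hp | hp
  · have := hlow p hp; tauto
  · have e : p = b0 - 1 + ((p - (b0 - 1)).toNat : ℤ) := by omega
    rw [e]
    exact key _


variable {μ lam : IntPartition}

lemma H_step (C : WhiteRowConfig μ lam) (p : ℤ) :
    (if C.h (p + 1) then (1:ℤ) else 0) =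
      (if C.h p then (1:ℤ) else 0) + (if mayaParticle μ p then (1:ℤ) else 0)
        - (if mayaParticle lam p then (1:ℤ) else 0) := by
  have hc := C.compat p
  unfold okWhite at hc
  rcases hc with ⟨hb, hl, ht, hr⟩ | ⟨hb, hl, ht, hr⟩ | ⟨hb, hl, ht, hr⟩ |
    ⟨hb, hl, ht, hr⟩ | ⟨hb, hl, ht, hr⟩ <;>
    simp [hb, hl, ht, hr]

lemma H_eq (C : WhiteRowConfig μ lam) (p : ℤ) :
    (if C.h p then (1:ℤ) else 0) = (cnt lam p : ℤ) - (cnt μ p : ℤ) := by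
  set g : ℤ → ℤ := fun q =>
    (if C.h q then (1:ℤ) else 0) - (cnt lam q : ℤ) + (cnt μ q : ℤ) with hg
  have hstep : ∀ q : ℤ, g q = g (q + 1) := by
    intro q
    have h1 := H_step C q
    have h2 := cnt_step μ q
    have h3 := cnt_step lam q
    have h2' : (cnt μ q : ℤ) = (cnt μ (q + 1) : ℤ) + (if mayaParticle μ q then (1:ℤ) else 0) := by
      by_cases hb : mayaParticle μ q <;> simp [hb] at h2 ⊢ <;> omega
    have h3' : (cnt lam q : ℤ) = (cnt lam (q + 1) : ℤ) + (if mayaParticle lam q then (1:ℤ) else 0) := by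
      by_cases hb : mayaParticle lam q <;> simp [hb] at h3 ⊢ <;> omega
    simp only [hg]
    linarith [h1, h2', h3']
  have hconst : ∀ (n : ℕ) (q : ℤ), g q = g (q + n) := by
    intro n
    induction n with
    | zero => intro q; simp
    | succ n ih =>
      intro q
      have : g q = g (q + n) := ih q
      rw [this, hstep (q + n)]
      congr 1
      push_cast
      ring
  -- choose a large Q
  obtain ⟨u, hu⟩ := C.sides.bddAbove
  set Q : ℤ := max (max p (u + 1)) (max ((μ.part 0 : ℤ)) ((lam.part 0 : ℤ))) with hQ
  have hQp : p ≤ Q := le_trans (le_max_left _ _) (le_max_left _ _)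
  have hgQ : g Q = 0 := by
    have hnot : ¬ C.h Q := by
      intro hh
      have := hu hh
      have : u + 1 ≤ Q := le_trans (le_max_right _ _) (le_max_left _ _)
      omega
    have hz1 : cnt μ Q = 0 := by
      apply cnt_eq_zero
      have : (μ.part 0 : ℤ) ≤ Q := le_trans (le_max_left _ _) (le_max_right _ _)
      unfold pos
      omega
    have hz2 : cnt lam Q = 0 := by
      apply cnt_eq_zero
      have : (lam.part 0 : ℤ) ≤ Q := le_trans (le_max_right _ _) (le_max_right _ _)
      unfold pos
      omega
    simp [hg, hnot, hz1, hz2]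
  have : g p = g Q := by
    have e : Q = p + ((Q - p).toNat : ℤ) := by omega
    rw [e]
    exact hconst _ p
  rw [hgQ] at this
  simp only [hg] at this
  linarith

lemma cnt_bounds (C : WhiteRowConfig μ lam) (p : ℤ) :
    cnt μ p ≤ cnt lam p ∧ cnt lam p ≤ cnt μ p + 1 := by
  have hh := H_eq C p
  by_cases h : C.h p
  · rw [if_pos h] at hh; omega
  · rw [if_neg h] at hh; omega

lemma h_iff_cnt (C : WhiteRowConfig μ lam) (p : ℤ) :
    C.h p ↔ cnt lam p = cnt μ p + 1 := by
  constructor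
  · intro h
    have hh := H_eq C p
    rw [if_pos h] at hh
    omega
  · intro he
    by_contra h
    have hh := H_eq C p
    rw [if_neg h] at hh
    omega

lemma interlace_of_config (C : WhiteRowConfig μ lam) : Interlace μ lam := by
  intro i
  constructor
  · have h1 : i < cnt μ (pos μ i) := lt_cnt_iff.2 le_rfl
    have h2 := (cnt_bounds C (pos μ i)).1
    have h3 : pos μ i ≤ pos lam i := lt_cnt_iff.1 (lt_of_lt_of_le h1 h2)
    unfold pos at h3
    omega
  · by_contra hc
    push_neg at hc
    set p := pos μ i with hp
    have hge : p ≤ pos lam (i + 1) := by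
      unfold pos
      simp only [hp, pos]
      push_cast
      omega
    have h1 : i + 1 < cnt lam p := lt_cnt_iff.2 hge
    have h2 : cnt μ p ≤ i + 1 := by
      by_contra h
      push_neg at h
      have h3 := lt_cnt_iff.1 h
      have h4 := pos_lt (P := μ) (show i < i + 1 by omega)
      omega
    have h5 := (cnt_bounds C p).2
    have hcnt : cnt lam p = cnt μ p + 1 := by omega
    have hhp : C.h p := (h_iff_cnt C p).2 hcnt
    exact okWhite_not_bl (C.compat p) ⟨⟨i, hp⟩, hhp⟩

/-- The explicit horizontal-edge occupancy. -/
def h0 (μ lam : IntPartition) (p : ℤ) : Prop := ∃ m, pos μ m < p ∧ p ≤ pos lam m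

section IL
variable (hIL : Interlace μ lam)
include hIL

lemma ILa (m : ℕ) : pos μ m ≤ pos lam m := by
  have := (hIL m).1
  unfold pos
  have : (μ.part m : ℤ) ≤ (lam.part m : ℤ) := by exact_mod_cast (hIL m).1
  omega

lemma ILb (m : ℕ) : pos lam (m + 1) < pos μ m := by
  have h := (hIL m).2
  unfold pos
  have : (lam.part (m + 1) : ℤ) ≤ (μ.part m : ℤ) := by exact_mod_cast h
  push_cast
  omega

lemma not_h0_of_maya (hb : mayaParticle μ p) : ¬ h0 μ lam p := by
  obtain ⟨m, hm⟩ := hb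
  rintro ⟨k, hk1, hk2⟩
  have hm' : p = pos μ m := hm
  rcases lt_trichotomy k m with h | h | h
  · have := pos_lt (P := μ) h
    omega
  · subst h; omega
  · have h1 : pos lam k ≤ pos lam (m + 1) := pos_le h
    have h2 := ILb hIL m
    omega

lemma not_r_of_t {p : ℤ} (ht : mayaParticle lam p) : ¬ h0 μ lam (p + 1) := by
  obtain ⟨j, hj⟩ := ht
  have hj' : p = pos lam j := hj
  rintro ⟨k, hk1, hk2⟩
  rcases le_or_gt j k with h | h
  · have := pos_le (P := lam) h
    omega
  · have h1 : pos lam j ≤ pos lam (k + 1) := pos_le h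
    have h2 := ILb hIL k
    omega

lemma r_of_b {p : ℤ} (hb : mayaParticle μ p) (ht : ¬ mayaParticle lam p) :
    h0 μ lam (p + 1) := by
  obtain ⟨m, hm⟩ := hb
  have hm' : p = pos μ m := hm
  refine ⟨m, by omega, ?_⟩
  rcases eq_or_lt_of_le (ILa hIL m) with h | h
  · exact absurd (maya_iff.mpr ⟨m, by omega⟩) ht
  · omega

omit hIL in
lemma t_or_r_of_l {p : ℤ} (hl : h0 μ lam p) :
    mayaParticle lam p ∨ h0 μ lam (p + 1) := by
  obtain ⟨m, hm1, hm2⟩ := hl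
  rcases eq_or_lt_of_le hm2 with h | h
  · exact Or.inl ⟨m, h⟩
  · exact Or.inr ⟨m, by omega, by omega⟩

lemma empty_case {p : ℤ} (hb : ¬ mayaParticle μ p) (hl : ¬ h0 μ lam p) :
    ¬ mayaParticle lam p ∧ ¬ h0 μ lam (p + 1) := by
  constructor
  · rintro ⟨m, hm⟩
    have hm' : p = pos lam m := hm
    rcases eq_or_lt_of_le (ILa hIL m) with h | h
    · exact hb (maya_iff.mpr ⟨m, by omega⟩)
    · exact hl ⟨m, by omega, by omega⟩
  · rintro ⟨k, hk1, hk2⟩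
    rcases eq_or_lt_of_le (show pos μ k ≤ p by omega) with h | h
    · exact hb (maya_iff.mpr ⟨k, by omega⟩)
    · exact hl ⟨k, by omega, by omega⟩

lemma compat0 (p : ℤ) :
    okWhite (mayaParticle μ p) (h0 μ lam p) (mayaParticle lam p) (h0 μ lam (p + 1)) := by
  by_cases hb : mayaParticle μ p
  · have hl := not_h0_of_maya hIL hb
    by_cases ht : mayaParticle lam p
    · exact Or.inr (Or.inr (Or.inr (Or.inl ⟨hb, hl, ht, not_r_of_t hIL ht⟩)))
    · exact Or.inr (Or.inl ⟨hb, hl, ht, r_of_b hIL hb ht⟩)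
  · by_cases hl : h0 μ lam p
    · by_cases ht : mayaParticle lam p
      · exact Or.inr (Or.inr (Or.inr (Or.inr ⟨hb, hl, ht, not_r_of_t hIL ht⟩)))
      · exact Or.inr (Or.inr (Or.inl ⟨hb, hl, ht, (t_or_r_of_l hl).resolve_left ht⟩))
    · obtain ⟨ht, hr⟩ := empty_case hIL hb hl
      exact Or.inl ⟨hb, hl, ht, hr⟩

lemma interval_unique {p : ℤ} {m k : ℕ}
    (hm : pos μ m < p ∧ p ≤ pos lam m) (hk : pos μ k < p ∧ p ≤ pos lam k) : m = k := by
  rcases lt_trichotomy m k with h | h | h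
  · exfalso
    have h1 : pos lam k ≤ pos lam (m + 1) := pos_le h
    have h2 := ILb hIL m
    omega
  · exact h
  · exfalso
    have h1 : pos lam m ≤ pos lam (k + 1) := pos_le h
    have h2 := ILb hIL k
    omega

omit hIL in
lemma h0_finite : {p : ℤ | h0 μ lam p}.Finite := by
  obtain ⟨N1, h1⟩ := μ.eventually_zero
  obtain ⟨N2, h2⟩ := lam.eventually_zero
  apply Set.Finite.subset (Set.finite_Ioc (pos μ (max N1 N2)) (pos lam 0))
  rintro p ⟨m, hm1, hm2⟩
  constructor
  · rcases le_or_gt (max N1 N2) m with hle | hlt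
    · exfalso
      have e1 : μ.part m = 0 := h1 m (le_trans (le_max_left _ _) hle)
      have e2 : lam.part m = 0 := h2 m (le_trans (le_max_right _ _) hle)
      unfold pos at hm1 hm2
      rw [e1] at hm1
      rw [e2] at hm2
      omega
    · exact lt_of_le_of_lt (pos_le hlt.le) hm1
  · exact le_trans hm2 (pos_le (Nat.zero_le m))

noncomputable def buildConfig : WhiteRowConfig μ lam where
  h := h0 μ lam
  sides := h0_finite
  compat := compat0 hIL

lemma count_h0 : Nat.card {p : ℤ // h0 μ lam p} + μ.size = lam.size := by
  obtain ⟨N1, hN1⟩ := μ.eventually_zero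
  obtain ⟨N2, hN2⟩ := lam.eventually_zero
  set N := max N1 N2 with hN
  have hzμ : ∀ i, N ≤ i → μ.part i = 0 := fun i hi => hN1 i (le_trans (le_max_left _ _) hi)
  have hzl : ∀ i, N ≤ i → lam.part i = 0 := fun i hi => hN2 i (le_trans (le_max_right _ _) hi)
  set S : Finset ℤ := (Finset.range N).biUnion (fun m => Finset.Ioc (pos μ m) (pos lam m))
    with hS
  have hset : {p : ℤ | h0 μ lam p} = ↑S := by
    ext p
    simp only [Set.mem_setOf_eq, hS, Finset.coe_biUnion, Finset.mem_coe, Finset.mem_range,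
      Set.mem_iUnion, Finset.mem_Ioc, Finset.coe_Ioc, Set.mem_Ioc]
    constructor
    · rintro ⟨m, hm1, hm2⟩
      refine ⟨m, ?_, hm1, hm2⟩
      by_contra hc
      push_neg at hc
      have e1 := hzμ m hc
      have e2 := hzl m hc
      unfold pos at hm1 hm2
      rw [e1] at hm1
      rw [e2] at hm2
      omega
    · rintro ⟨m, _, hm1, hm2⟩
      exact ⟨m, hm1, hm2⟩
  have hcard : Nat.card {p : ℤ // h0 μ lam p} = S.card := by
    have hc2 : Nat.card ↥{p : ℤ | h0 μ lam p} = S.card := by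
      rw [Nat.card_coe_set_eq, hset, Set.ncard_coe_finset]
    exact hc2
  rw [hcard]
  have hdisj : ∀ m ∈ Finset.range N, ∀ k ∈ Finset.range N, m ≠ k →
      Disjoint (Finset.Ioc (pos μ m) (pos lam m)) (Finset.Ioc (pos μ k) (pos lam k)) := by
    intro m _ k _ hmk
    rw [Finset.disjoint_left]
    intro p hp hp'
    rw [Finset.mem_Ioc] at hp hp'
    exact hmk (interval_unique hIL hp hp')
  rw [hS, Finset.card_biUnion hdisj]
  have hterm : ∀ m ∈ Finset.range N,
      (Finset.Ioc (pos μ m) (pos lam m)).card = lam.part m - μ.part m := by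
    intro m _
    rw [Int.card_Ioc]
    have := (hIL m).1
    unfold pos
    omega
  rw [Finset.sum_congr rfl hterm]
  have hsμ : μ.size = ∑ m ∈ Finset.range N, μ.part m := by
    apply finsum_eq_sum_of_support_subset
    intro i hi
    simp only [Function.mem_support] at hi
    simp only [Finset.coe_range, Set.mem_Iio]
    by_contra hc
    push_neg at hc
    exact hi (hzμ i hc)
  have hsl : lam.size = ∑ m ∈ Finset.range N, lam.part m := by
    apply finsum_eq_sum_of_support_subset
    intro i hi
    simp only [Function.mem_support] at hi
    simp only [Finset.coe_range, Set.mem_Iio]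
    by_contra hc
    push_neg at hc
    exact hi (hzl i hc)
  rw [show μ.size = ∑ m ∈ Finset.range N, μ.part m from hsμ,
    show lam.size = ∑ m ∈ Finset.range N, lam.part m from hsl,
    ← Finset.sum_add_distrib]
  apply Finset.sum_congr rfl
  intro m _
  have := (hIL m).1
  omega

end IL


end WhiteRowAux

/-- For the white five-vertex row: a valid configuration with bottom boundary μ and
top boundary λ exists iff μ ⪯ λ; in that case it is unique, and its weight is
x^{|λ|-|μ|} (the number of vertices of weight x, i.e. of occupied horizontal
edges, equals |λ| - |μ|). -/
theorem white_row_transfer (μ lam : IntPartition) :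
    (Interlace μ lam ↔ Nonempty (WhiteRowConfig μ lam)) ∧
    (∀ C C' : WhiteRowConfig μ lam, C.h = C'.h) ∧
    (∀ C : WhiteRowConfig μ lam,
      Nat.card {p : ℤ // C.h p} + μ.size = lam.size) := by
  refine ⟨⟨fun hIL => ⟨WhiteRowAux.buildConfig hIL⟩,
    fun hne => WhiteRowAux.interlace_of_config hne.some⟩,
    WhiteRowAux.h_unique, ?_⟩
  intro C
  have hIL := WhiteRowAux.interlace_of_config C
  have hh : C.h = WhiteRowAux.h0 μ lam :=
    WhiteRowAux.h_unique C (WhiteRowAux.buildConfig hIL)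
  have hc : Nat.card {p : ℤ // C.h p} = Nat.card {p : ℤ // WhiteRowAux.h0 μ lam p} := by
    rw [hh]
  rw [hc]
  exact WhiteRowAux.count_h0 hIL
end

section
/- There is a bijection between reverse plane partitions of shape λ and sequences of partitions λ^{(0)} = ∅, λ^{(1)}, ..., λ^{(n)}, λ^{(n+1)} = ∅ with n = λ₁ + λ'₁ - 1, where consecutive partitions satisfy λ^{(k)} ⪯ λ^{(k+1)} if position k in the Maya diagram of λ is a hole and λ^{(k)} ⪰ λ^{(k+1)} if it is a particle, the sequence being obtained by reading the entries of the filling along diagonals (vertical slices in Russian convention) from left to right; moreover, under this bijection the volume of the RPP equals the sum over k of |λ^{(k)}|. -/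
/-- A reverse plane partition of shape `P`: a filling of the Young diagram of `P`
by nonnegative integers, weakly increasing along rows (left to right) and along
columns (bottom to top, i.e. with increasing row index `i`). -/
structure RPP (P : IntPartition) where
  entry : ℕ → ℕ → ℕ
  zero_outside : ∀ i j, P.part i ≤ j → entry i j = 0
  row_mono : ∀ i j k, j ≤ k → k < P.part i → entry i j ≤ entry i k
  col_mono : ∀ i k j, i ≤ k → j < P.part k → entry i j ≤ entry k j

/-- The volume of a reverse plane partition: the sum of all entries. -/
noncomputable def RPP.volume {P : IntPartition} (Λ : RPP P) : ℕ :=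
  ∑ᶠ i, ∑ᶠ j, Λ.entry i j

/-- The hook-length product ∏_{c ∈ λ} (1 - q^{h_λ(c)})⁻¹ as a power series. -/
noncomputable def hookProd (P : IntPartition) : PowerSeries ℚ :=
  ∏ᶠ i, ∏ j ∈ Finset.range (P.part i),
    (1 - (PowerSeries.X : PowerSeries ℚ) ^ (P.hook i j))⁻¹

/-- Generating function ∑_{Λ ∈ RPP(λ)} q^{|Λ|}. -/
noncomputable def rppSeries (P : IntPartition) : PowerSeries ℚ :=
  PowerSeries.mk fun n => (Nat.card {Λ : RPP P // Λ.volume = n} : ℚ)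

def isParticleStep (P : IntPartition) (k : ℕ) : Prop :=
  ∃ i, i < P.conj 0 ∧ k + i + 1 = P.conj 0 + P.part i

/-- Number of particle (gray) steps among steps 0,…,k-1. -/
noncomputable def grayCount (P : IntPartition) (k : ℕ) : ℕ :=
  Nat.card {j : ℕ // j < k ∧ isParticleStep P j}

/-- Absolute column of the center of the Maya diagram of the k-th diagonal slice:
the center starts at λ'₁ and shifts one column left across each gray (particle) row. -/
noncomputable def mayaCenter (P : IntPartition) (k : ℕ) : ℤ :=
  (P.conj 0 : ℤ) - grayCount P k

/-- Number of cells of the diagram of `P` on the diagonal of content `c`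
(0-indexed cells (i,j) with j - i = c). -/
noncomputable def diagCount (P : IntPartition) (c : ℤ) : ℕ :=
  Nat.card {i : ℕ // 0 ≤ (i : ℤ) + c ∧ (i : ℤ) + c < P.part i}

/-- The k-th diagonal slice of a reverse plane partition, read as a partition:
the entries on the diagonal of content k - λ'₁, read from the outer (topmost)
cell inward (entries of an RPP weakly decrease inward along a diagonal). -/
noncomputable def RPP.slice {P : IntPartition} (Λ : RPP P) (k m : ℕ) : ℕ :=
  let c : ℤ := (k : ℤ) - P.conj 0
  let cnt := diagCount P c
  if m < cnt then
    let i0 : ℕ := (max 0 (-c)).toNat + (cnt - 1 - m)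
    Λ.entry i0 ((i0 : ℤ) + c).toNat
  else 0


/-- The empty partition. -/
def emptyPartition : IntPartition :=
  ⟨fun _ => 0, fun _ _ _ => le_rfl, ⟨0, fun _ _ => rfl⟩⟩

/-- Sequences of partitions ∅ = λ⁽⁰⁾, λ⁽¹⁾, …, λ⁽ⁿ⁺¹⁾ = ∅ with n = λ₁ + λ'₁ - 1,
interlacing upward (λ⁽ᵏ⁾ ⪯ λ⁽ᵏ⁺¹⁾) at each hole step of the Maya diagram of λ and
downward (λ⁽ᵏ⁾ ⪰ λ⁽ᵏ⁺¹⁾) at each particle step. -/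
def InterlacingSeq (P : IntPartition) (f : ℕ → IntPartition) : Prop :=
  f 0 = emptyPartition ∧
  (∀ k, P.part 0 + P.conj 0 ≤ k → f k = emptyPartition) ∧
  ∀ k < P.part 0 + P.conj 0,
    (isParticleStep P k → Interlace (f (k + 1)) (f k)) ∧
    (¬ isParticleStep P k → Interlace (f k) (f (k + 1)))

section Aux

open Classical in
noncomputable instance : DecidablePred (isParticleStep P) := fun _ => Classical.dec _

@[ext] lemma IntPartition.ext' {p q : IntPartition} (h : ∀ i, p.part i = q.part i) : p = q := by
  cases p; cases q; simp only [IntPartition.mk.injEq]; exact funext h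

@[ext] lemma RPP.ext' {P : IntPartition} {p q : RPP P}
    (h : ∀ i j, p.entry i j = q.entry i j) : p = q := by
  cases p; cases q; simp only [RPP.mk.injEq]; funext i j; exact h i j

variable (P : IntPartition)

/-- The function `g i = λ_i - i`. -/
def gfun (i : ℕ) : ℤ := (P.part i : ℤ) - i

lemma gfun_strict_anti {i j : ℕ} (h : i < j) : gfun P j < gfun P i := by
  have := P.antitone h.le
  unfold gfun
  omega

lemma gfun_exists (c : ℤ) : ∃ i, gfun P i ≤ c := by
  refine ⟨P.part 0 + c.natAbs, ?_⟩
  have h1 := P.antitone (Nat.zero_le (P.part 0 + c.natAbs))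
  unfold gfun
  omega

/-- `tfun c` = number of `i` with `g i > c` (the set of such `i` is `Iio (tfun c)`). -/
noncomputable def tfun (c : ℤ) : ℕ := Nat.find (gfun_exists P c)

lemma gfun_tfun_le (c : ℤ) : gfun P (tfun P c) ≤ c := Nat.find_spec (gfun_exists P c)

lemma lt_tfun_iff {c : ℤ} {i : ℕ} : i < tfun P c ↔ c < gfun P i := by
  constructor
  · intro h
    exact lt_of_not_ge (Nat.find_min (gfun_exists P c) h)
  · intro h
    by_contra hle
    push_neg at hle
    rcases Nat.lt_or_ge (tfun P c) i with h' | h'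
    · exact absurd ((gfun_strict_anti P h').trans_le (gfun_tfun_le P c)).le (not_le.2 h)
    · have : i = tfun P c := le_antisymm h' hle
      subst this
      exact absurd (gfun_tfun_le P c) (not_le.2 h)

lemma tfun_le_of {c : ℤ} {i : ℕ} (h : gfun P i ≤ c) : tfun P c ≤ i :=
  Nat.find_le h

/-- `λ_i > 0 ↔ i < λ'_1`. -/
lemma part_pos_iff (i : ℕ) : 0 < P.part i ↔ i < P.conj 0 := by
  obtain ⟨N, hN⟩ := P.eventually_zero
  have hex : ∃ M, P.part M = 0 := ⟨N, hN N le_rfl⟩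
  set M := Nat.find hex with hM
  have key : ∀ j, 0 < P.part j ↔ j < M := by
    intro j
    constructor
    · intro h
      by_contra hle
      push_neg at hle
      have := P.antitone hle
      rw [Nat.find_spec hex] at this
      omega
    · intro h
      have := Nat.find_min hex h
      omega
  have hset : {i : ℕ | 0 < P.part i} = Set.Iio M := Set.ext fun j => key j
  have : P.conj 0 = M := by
    unfold IntPartition.conj
    rw [Nat.card_congr (Equiv.subtypeEquivRight key),
      Nat.card_congr (Fin.equivSubtype (n := M)).symm, Nat.card_eq_fintype_card,
      Fintype.card_fin]
  rw [this]; exact key i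

end Aux
section Aux2
variable (P : IntPartition)

lemma tfun_succ_le (c : ℤ) : tfun P (c + 1) ≤ tfun P c :=
  tfun_le_of P ((gfun_tfun_le P c).trans (by omega))

lemma tfun_le_succ (c : ℤ) : tfun P c ≤ tfun P (c + 1) + 1 := by
  have h1 := gfun_tfun_le P (c + 1)
  have h2 := gfun_strict_anti P (show tfun P (c+1) < tfun P (c+1) + 1 by omega)
  exact tfun_le_of P (by omega)

lemma base_eq (k : ℕ) : (max 0 (-((k:ℤ) - P.conj 0))).toNat = P.conj 0 - k := by
  have h2 := le_max_left (0:ℤ) (-((k:ℤ) - P.conj 0))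
  have h3 := le_max_right (0:ℤ) (-((k:ℤ) - P.conj 0))
  rcases max_choice (0:ℤ) (-((k:ℤ) - P.conj 0)) with h | h <;> rw [h] at h2 h3 ⊢ <;> omega

lemma base_le_tfun (k : ℕ) : P.conj 0 - k ≤ tfun P ((k:ℤ) - P.conj 0) := by
  rcases le_or_gt (P.conj 0) k with h | h
  · omega
  · have hi : ((P.conj 0 - k - 1 : ℕ) : ℤ) = (P.conj 0 : ℤ) - k - 1 := by omega
    have hp := Nat.zero_le (P.part (P.conj 0 - k - 1))
    have : (P.conj 0 - k - 1 : ℕ) < tfun P ((k:ℤ) - P.conj 0) := by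
      rw [lt_tfun_iff]
      unfold gfun
      omega
    omega

lemma tfun_le_r (k : ℕ) : tfun P ((k:ℤ) - P.conj 0) ≤ P.conj 0 := by
  have h0 : P.part (P.conj 0) = 0 := by
    have := part_pos_iff P (P.conj 0)
    omega
  refine tfun_le_of P ?_
  unfold gfun
  rw [h0]
  push_cast
  omega

lemma diagCount_eq (k : ℕ) :
    diagCount P ((k:ℤ) - P.conj 0) = tfun P ((k:ℤ) - P.conj 0) - (P.conj 0 - k) := by
  unfold diagCount
  have hmem : ∀ i : ℕ, (0 ≤ (i:ℤ) + ((k:ℤ) - P.conj 0) ∧ (i:ℤ) + ((k:ℤ) - P.conj 0) < P.part i)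
      ↔ (P.conj 0 - k ≤ i ∧ i < tfun P ((k:ℤ) - P.conj 0)) := by
    intro i
    rw [lt_tfun_iff]
    unfold gfun
    omega
  rw [Nat.card_congr (Equiv.subtypeEquivRight hmem)]
  show Nat.card (Set.Ico (P.conj 0 - k) (tfun P ((k:ℤ) - P.conj 0))) = _
  simp [Nat.card_eq_fintype_card]

lemma particle_iff (k : ℕ) :
    isParticleStep P k ↔
      tfun P ((k:ℤ) - P.conj 0) = tfun P ((k:ℤ) - P.conj 0 + 1) + 1 := by
  set c : ℤ := (k:ℤ) - P.conj 0 with hc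
  have h1 := tfun_succ_le P c
  have h2 := tfun_le_succ P c
  constructor
  · rintro ⟨i, hir, heq⟩
    have hg : gfun P i = c + 1 := by unfold gfun; omega
    have hlt : i < tfun P c := lt_tfun_iff P |>.2 (by omega)
    have hge : tfun P (c + 1) ≤ i := tfun_le_of P (by omega)
    omega
  · intro h
    have hle : gfun P (tfun P (c+1)) ≤ c + 1 := gfun_tfun_le P (c+1)
    have hlt : tfun P (c+1) < tfun P c := by omega
    have hgt : c < gfun P (tfun P (c+1)) := (lt_tfun_iff P).1 hlt
    have hg : gfun P (tfun P (c+1)) = c + 1 := by omega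
    refine ⟨tfun P (c+1), ?_, ?_⟩
    · rcases Nat.eq_zero_or_pos (P.part (tfun P (c+1))) with h0 | h0
      · unfold gfun at hg
        rw [h0] at hg
        push_cast at hg
        omega
      · exact (part_pos_iff P _).1 h0
    · unfold gfun at hg
      omega

lemma hole_iff (k : ℕ) :
    ¬ isParticleStep P k ↔
      tfun P ((k:ℤ) - P.conj 0) = tfun P ((k:ℤ) - P.conj 0 + 1) := by
  rw [particle_iff]
  have h1 := tfun_succ_le P ((k:ℤ) - P.conj 0)
  have h2 := tfun_le_succ P ((k:ℤ) - P.conj 0)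
  omega

lemma slice_eq {P : IntPartition} (Λ : RPP P) (k m : ℕ) :
    Λ.slice k m = if m < tfun P ((k:ℤ) - P.conj 0) - (P.conj 0 - k) then
      Λ.entry (tfun P ((k:ℤ) - P.conj 0) - 1 - m)
        (tfun P ((k:ℤ) - P.conj 0) - 1 - m + k - P.conj 0) else 0 := by
  unfold RPP.slice
  simp only [diagCount_eq, base_eq]
  set t := tfun P ((k:ℤ) - P.conj 0) with ht
  have hbt := base_le_tfun P k
  split
  · next h =>
    have hi0 : P.conj 0 - k + (t - (P.conj 0 - k) - 1 - m) = t - 1 - m := by omega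
    rw [hi0]
    congr 1
    omega
  · rfl

end Aux2
section Aux3
variable (P : IntPartition)

lemma part_gt {P : IntPartition} {k i : ℕ} (hbase : P.conj 0 ≤ i + k)
    (hit : i < tfun P ((k:ℤ) - P.conj 0)) : i + k - P.conj 0 < P.part i := by
  have := (lt_tfun_iff P).1 hit
  unfold gfun at this
  omega

lemma lt_tfun_of_part {P : IntPartition} {k i : ℕ} (hbase : P.conj 0 ≤ i + k)
    (h : i + k - P.conj 0 < P.part i) : i < tfun P ((k:ℤ) - P.conj 0) := by
  rw [lt_tfun_iff]
  unfold gfun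
  omega

/-- Entries of an RPP increase outward along diagonals. -/
lemma entry_diag_mono {P : IntPartition} (Λ : RPP P) {k i i' : ℕ} (h : i' ≤ i)
    (hbase : P.conj 0 ≤ i' + k) (hit : i < tfun P ((k:ℤ) - P.conj 0)) :
    Λ.entry i' (i' + k - P.conj 0) ≤ Λ.entry i (i + k - P.conj 0) := by
  have hpi : i + k - P.conj 0 < P.part i := part_gt (by omega) hit
  calc Λ.entry i' (i' + k - P.conj 0) ≤ Λ.entry i (i' + k - P.conj 0) :=
        Λ.col_mono i' i _ h (by omega)
    _ ≤ Λ.entry i (i + k - P.conj 0) := Λ.row_mono i _ _ (by omega) hpi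

/-- The k-th diagonal slice as a partition. -/
noncomputable def toSeqPart (Λ : RPP P) (k : ℕ) : IntPartition where
  part := Λ.slice k
  antitone := by
    intro m1 m2 h12
    rw [slice_eq, slice_eq]
    have hbt := base_le_tfun P k
    by_cases h2 : m2 < tfun P ((k:ℤ) - P.conj 0) - (P.conj 0 - k)
    · rw [if_pos h2, if_pos (show m1 < _ by omega)]
      exact entry_diag_mono Λ (by omega) (by omega) (by omega)
    · rw [if_neg h2]
      exact Nat.zero_le _
  eventually_zero := by
    refine ⟨tfun P ((k:ℤ) - P.conj 0), fun m hm => ?_⟩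
    rw [slice_eq, if_neg (by omega)]

lemma toSeqPart_particle (Λ : RPP P) (k : ℕ) (hp : isParticleStep P k) :
    Interlace (toSeqPart P Λ (k+1)) (toSeqPart P Λ k) := by
  intro m
  have hcast : ((k+1:ℕ):ℤ) - (P.conj 0:ℤ) = ((k:ℤ) - P.conj 0) + 1 := by push_cast; ring
  have ht12 := (particle_iff P k).1 hp
  have hbt1 := base_le_tfun P k
  have hbt2 := base_le_tfun P (k+1)
  rw [hcast] at hbt2
  set t1 := tfun P ((k:ℤ) - P.conj 0) with h1
  set t2 := tfun P (((k:ℤ) - P.conj 0) + 1) with h2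
  constructor
  · show Λ.slice (k+1) m ≤ Λ.slice k m
    rw [slice_eq, slice_eq, hcast, ← h1, ← h2]
    by_cases hm : m < t2 - (P.conj 0 - (k+1))
    · rw [if_pos hm, if_pos (show m < t1 - (P.conj 0 - k) by omega)]
      have hcol : t2 - 1 - m + (k+1) - P.conj 0 = t1 - 1 - m + k - P.conj 0 := by omega
      rw [hcol]
      exact Λ.col_mono _ _ _ (by omega) (part_gt (by omega) (by omega))
    · rw [if_neg hm]
      exact Nat.zero_le _
  · show Λ.slice k (m+1) ≤ Λ.slice (k+1) m
    rw [slice_eq, slice_eq, hcast, ← h1, ← h2]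
    by_cases hm : m + 1 < t1 - (P.conj 0 - k)
    · rw [if_pos hm, if_pos (show m < t2 - (P.conj 0 - (k+1)) by omega)]
      have hrow : t1 - 1 - (m+1) = t2 - 1 - m := by omega
      rw [hrow]
      refine Λ.row_mono _ _ _ (by omega) ?_
      have := part_gt (P := P) (k := k+1) (i := t2 - 1 - m) (by omega)
        (by rw [hcast]; omega)
      omega
    · rw [if_neg hm]
      exact Nat.zero_le _

lemma toSeqPart_hole (Λ : RPP P) (k : ℕ) (hp : ¬ isParticleStep P k) :
    Interlace (toSeqPart P Λ k) (toSeqPart P Λ (k+1)) := by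
  intro m
  have hcast : ((k+1:ℕ):ℤ) - (P.conj 0:ℤ) = ((k:ℤ) - P.conj 0) + 1 := by push_cast; ring
  have ht12 := (hole_iff P k).1 hp
  have hbt1 := base_le_tfun P k
  have hbt2 := base_le_tfun P (k+1)
  rw [hcast] at hbt2
  set t1 := tfun P ((k:ℤ) - P.conj 0) with h1
  set t2 := tfun P (((k:ℤ) - P.conj 0) + 1) with h2
  constructor
  · show Λ.slice k m ≤ Λ.slice (k+1) m
    rw [slice_eq, slice_eq, hcast, ← h1, ← h2]
    by_cases hm : m < t1 - (P.conj 0 - k)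
    · rw [if_pos hm, if_pos (show m < t2 - (P.conj 0 - (k+1)) by omega)]
      have hrow : t1 - 1 - m = t2 - 1 - m := by omega
      rw [hrow]
      refine Λ.row_mono _ _ _ (by omega) ?_
      have := part_gt (P := P) (k := k+1) (i := t2 - 1 - m) (by omega)
        (by rw [hcast]; omega)
      omega
    · rw [if_neg hm]
      exact Nat.zero_le _
  · show Λ.slice (k+1) (m+1) ≤ Λ.slice k m
    rw [slice_eq, slice_eq, hcast, ← h1, ← h2]
    by_cases hm : m + 1 < t2 - (P.conj 0 - (k+1))
    · rw [if_pos hm, if_pos (show m < t1 - (P.conj 0 - k) by omega)]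
      have hcol : t2 - 1 - (m+1) + (k+1) - P.conj 0 = t1 - 1 - m + k - P.conj 0 := by omega
      rw [hcol]
      exact Λ.col_mono _ _ _ (by omega) (part_gt (by omega) (by omega))
    · rw [if_neg hm]
      exact Nat.zero_le _

lemma toSeq_interlacing (Λ : RPP P) : InterlacingSeq P (fun k => toSeqPart P Λ k) := by
  refine ⟨?_, ?_, ?_⟩
  · apply IntPartition.ext'
    intro m
    show Λ.slice 0 m = 0
    rw [slice_eq]
    have := tfun_le_r P 0
    rw [if_neg (by omega)]
  · intro k hk
    apply IntPartition.ext'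
    intro m
    show Λ.slice k m = 0
    have ht : tfun P ((k:ℤ) - P.conj 0) = 0 := by
      have := tfun_le_of P (c := (k:ℤ) - P.conj 0) (i := 0) (by unfold gfun; push_cast; omega)
      omega
    rw [slice_eq, if_neg (by omega)]
  · intro k _
    exact ⟨fun hp => toSeqPart_particle P Λ k hp, fun hp => toSeqPart_hole P Λ k hp⟩

end Aux3
section Aux4
variable (P : IntPartition)

/-- Entry of the RPP reconstructed from an interlacing sequence. -/
noncomputable def fromSeqEntry (f : ℕ → IntPartition) (i j : ℕ) : ℕ :=
  if j < P.part i then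
    (f (j + (P.conj 0 - i))).part (tfun P (((j + (P.conj 0 - i) : ℕ) : ℤ) - P.conj 0) - 1 - i)
  else 0

variable {f : ℕ → IntPartition}

lemma fromSeq_row_step (hf : InterlacingSeq P f) (i j : ℕ) (hj : j + 1 < P.part i) :
    fromSeqEntry P f i j ≤ fromSeqEntry P f i (j + 1) := by
  have hir : i < P.conj 0 := (part_pos_iff P i).1 (by omega)
  have ha : P.part i ≤ P.part 0 := P.antitone (Nat.zero_le i)
  set k := j + (P.conj 0 - i) with hkdef
  have hk1 : (j + 1) + (P.conj 0 - i) = k + 1 := by omega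
  have hc : ((k:ℕ):ℤ) - P.conj 0 = (j:ℤ) - i := by omega
  have hc1 : ((k + 1:ℕ):ℤ) - P.conj 0 = ((j:ℤ) - i) + 1 := by omega
  have hkr : k < P.part 0 + P.conj 0 := by omega
  have hit1 : i < tfun P ((j:ℤ) - i) := by
    have := lt_tfun_of_part (P := P) (k := k) (i := i) (by omega) (by omega)
    rwa [hc] at this
  have hit2 : i < tfun P (((j:ℤ) - i) + 1) := by
    have := lt_tfun_of_part (P := P) (k := k + 1) (i := i) (by omega) (by omega)
    rwa [hc1] at this
  unfold fromSeqEntry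
  rw [if_pos (by omega), if_pos hj, hk1, hc, hc1]
  by_cases hp : isParticleStep P k
  · have ht := (particle_iff P k).1 hp
    rw [hc] at ht
    have hidx : tfun P ((j:ℤ) - i) - 1 - i = (tfun P (((j:ℤ) - i) + 1) - 1 - i) + 1 := by omega
    rw [hidx]
    exact (((hf.2.2 k hkr).1 hp) (tfun P (((j:ℤ) - i) + 1) - 1 - i)).2
  · have ht := (hole_iff P k).1 hp
    rw [hc] at ht
    rw [← ht]
    exact (((hf.2.2 k hkr).2 hp) (tfun P ((j:ℤ) - i) - 1 - i)).1

lemma fromSeq_col_step (hf : InterlacingSeq P f) (i j : ℕ) (hj : j < P.part (i + 1)) :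
    fromSeqEntry P f i j ≤ fromSeqEntry P f (i + 1) j := by
  have hir : i + 1 < P.conj 0 := (part_pos_iff P (i+1)).1 (by omega)
  have hji : j < P.part i := by
    have := P.antitone (show i ≤ i + 1 by omega)
    omega
  have ha : P.part i ≤ P.part 0 := P.antitone (Nat.zero_le i)
  set k' := j + (P.conj 0 - (i + 1)) with hkdef
  have hk1 : j + (P.conj 0 - i) = k' + 1 := by omega
  have hc : ((k':ℕ):ℤ) - P.conj 0 = (j:ℤ) - i - 1 := by omega
  have hc1 : ((k' + 1:ℕ):ℤ) - P.conj 0 = ((j:ℤ) - i - 1) + 1 := by omega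
  have hkr : k' < P.part 0 + P.conj 0 := by omega
  have hit1 : i < tfun P (((j:ℤ) - i - 1) + 1) := by
    have := lt_tfun_of_part (P := P) (k := k' + 1) (i := i) (by omega) (by omega)
    rwa [hc1] at this
  have hit0 : i + 1 < tfun P ((j:ℤ) - i - 1) := by
    have := lt_tfun_of_part (P := P) (k := k') (i := i + 1) (by omega) (by omega)
    rwa [hc] at this
  unfold fromSeqEntry
  rw [if_pos hji, if_pos hj, hk1, hc, hc1]
  by_cases hp : isParticleStep P k'
  · have ht := (particle_iff P k').1 hp
    rw [hc] at ht
    have hidx : tfun P ((j:ℤ) - i - 1) - 1 - (i + 1) = tfun P (((j:ℤ) - i - 1) + 1) - 1 - i := by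
      omega
    rw [hidx]
    exact (((hf.2.2 k' hkr).1 hp) (tfun P (((j:ℤ) - i - 1) + 1) - 1 - i)).1
  · have ht := (hole_iff P k').1 hp
    rw [hc] at ht
    have hidx : tfun P (((j:ℤ) - i - 1) + 1) - 1 - i
        = (tfun P ((j:ℤ) - i - 1) - 1 - (i + 1)) + 1 := by omega
    rw [hidx]
    exact (((hf.2.2 k' hkr).2 hp) (tfun P ((j:ℤ) - i - 1) - 1 - (i + 1))).2

/-- The RPP reconstructed from an interlacing sequence. -/
noncomputable def fromSeq (hf : InterlacingSeq P f) : RPP P where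
  entry := fromSeqEntry P f
  zero_outside := fun i j h => by unfold fromSeqEntry; rw [if_neg (by omega)]
  row_mono := by
    intro i j k hjk hk
    induction k, hjk using Nat.le_induction with
    | base => exact le_refl _
    | succ k hk' ih =>
      exact (ih (by omega)).trans (fromSeq_row_step P hf i k hk)
  col_mono := by
    intro i k j hik hj
    induction k, hik using Nat.le_induction with
    | base => exact le_refl _
    | succ k hk' ih =>
      have hjk : j < P.part k := by
        have := P.antitone (show k ≤ k + 1 by omega)
        omega
      exact (ih hjk).trans (fromSeq_col_step P hf k j hj)

end Aux4
section Aux5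
variable (P : IntPartition) {f : ℕ → IntPartition}

lemma fromSeq_toSeq (Λ : RPP P) :
    fromSeq P (toSeq_interlacing P Λ) = Λ := by
  apply RPP.ext'
  intro i j
  show fromSeqEntry P (fun k => toSeqPart P Λ k) i j = Λ.entry i j
  unfold fromSeqEntry
  by_cases hj : j < P.part i
  · rw [if_pos hj]
    have hir : i < P.conj 0 := (part_pos_iff P i).1 (by omega)
    set k := j + (P.conj 0 - i) with hkdef
    have hik : P.conj 0 ≤ i + k := by omega
    have hjk : i + k - P.conj 0 = j := by omega
    have hit : i < tfun P ((k:ℤ) - P.conj 0) := lt_tfun_of_part hik (by omega)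
    have hbt := base_le_tfun P k
    show Λ.slice k (tfun P ((k:ℤ) - P.conj 0) - 1 - i) = Λ.entry i j
    rw [slice_eq, if_pos (by omega)]
    have h1 : tfun P ((k:ℤ) - P.conj 0) - 1 - (tfun P ((k:ℤ) - P.conj 0) - 1 - i) = i := by
      omega
    have h2 : tfun P ((k:ℤ) - P.conj 0) - 1 - (tfun P ((k:ℤ) - P.conj 0) - 1 - i) + k
        - P.conj 0 = j := by omega
    rw [h2, h1]
  · rw [if_neg hj, Λ.zero_outside i j (by omega)]

lemma parts_bound_fwd (hf : InterlacingSeq P f) :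
    ∀ (k m : ℕ), k + tfun P ((k:ℤ) - P.conj 0) ≤ m + P.conj 0 → (f k).part m = 0 := by
  intro k
  induction k with
  | zero =>
    intro m _
    rw [hf.1]; rfl
  | succ k ih =>
    intro m hm
    rcases le_or_gt (P.part 0 + P.conj 0) (k + 1) with hk | hk
    · rw [hf.2.1 (k+1) hk]; rfl
    · have hcast : ((k+1:ℕ):ℤ) - (P.conj 0:ℤ) = ((k:ℤ) - P.conj 0) + 1 := by push_cast; ring
      rw [hcast] at hm
      have hbt := base_le_tfun P k
      have hkr : k < P.part 0 + P.conj 0 := by omega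
      by_cases hp : isParticleStep P k
      · have ht := (particle_iff P k).1 hp
        have h1 := (((hf.2.2 k hkr).1 hp) m).1
        have h2 := ih m (by omega)
        omega
      · have ht := (hole_iff P k).1 hp
        have hm1 : 1 ≤ m := by omega
        have h1 := (((hf.2.2 k hkr).2 hp) (m - 1)).2
        have h2 := ih (m - 1) (by omega)
        rw [show m - 1 + 1 = m by omega] at h1
        omega

lemma parts_bound_bwd (hf : InterlacingSeq P f) :
    ∀ (d k m : ℕ), P.part 0 + P.conj 0 ≤ k + d → tfun P ((k:ℤ) - P.conj 0) ≤ m →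
      (f k).part m = 0 := by
  intro d
  induction d with
  | zero =>
    intro k m hk _
    rw [hf.2.1 k (by omega)]; rfl
  | succ d ih =>
    intro k m hk hm
    rcases le_or_gt (P.part 0 + P.conj 0) k with hk' | hk'
    · rw [hf.2.1 k hk']; rfl
    · have hcast : ((k+1:ℕ):ℤ) - (P.conj 0:ℤ) = ((k:ℤ) - P.conj 0) + 1 := by push_cast; ring
      have ihk := ih (k+1)
      rw [hcast] at ihk
      by_cases hp : isParticleStep P k
      · have ht := (particle_iff P k).1 hp
        have hm1 : 1 ≤ m := by
          have := base_le_tfun P k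
          omega
        have h1 := (((hf.2.2 k hk').1 hp) (m - 1)).2
        have h2 := ihk (m - 1) (by omega) (by omega)
        rw [show m - 1 + 1 = m by omega] at h1
        omega
      · have ht := (hole_iff P k).1 hp
        have h1 := (((hf.2.2 k hk').2 hp) m).1
        have h2 := ihk m (by omega) (by omega)
        omega

lemma slice_fromSeq (hf : InterlacingSeq P f) (k m : ℕ) :
    (fromSeq P hf).slice k m = (f k).part m := by
  rw [slice_eq]
  have hbt := base_le_tfun P k
  set t1 := tfun P ((k:ℤ) - P.conj 0) with ht1
  by_cases hm : m < t1 - (P.conj 0 - k)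
  · rw [if_pos hm]
    set i0 := t1 - 1 - m with hi0
    set j0 := t1 - 1 - m + k - P.conj 0 with hj0
    have hik : P.conj 0 ≤ i0 + k := by omega
    have hpj : j0 < P.part i0 := part_gt hik (by omega)
    have hir : i0 < P.conj 0 := (part_pos_iff P i0).1 (by omega)
    show fromSeqEntry P f i0 j0 = (f k).part m
    unfold fromSeqEntry
    rw [if_pos hpj, show j0 + (P.conj 0 - i0) = k by omega]
    congr 1
    omega
  · rw [if_neg hm]
    rcases le_or_gt (P.conj 0) k with hrk | hrk
    · exact (parts_bound_bwd P hf (P.part 0 + P.conj 0) k m (by omega) (by omega)).symm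
    · exact (parts_bound_fwd P hf k m (by omega)).symm

end Aux5
section Aux6
variable (P : IntPartition)

lemma slice_entry (Λ : RPP P) {i j : ℕ} (hj : j < P.part i) :
    Λ.slice (j + (P.conj 0 - i))
      (tfun P ((((j + (P.conj 0 - i)) : ℕ) : ℤ) - P.conj 0) - 1 - i) = Λ.entry i j := by
  have hir : i < P.conj 0 := (part_pos_iff P i).1 (by omega)
  set k := j + (P.conj 0 - i) with hkdef
  have hik : P.conj 0 ≤ i + k := by omega
  have hit : i < tfun P ((k:ℤ) - P.conj 0) := lt_tfun_of_part hik (by omega)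
  have hbt := base_le_tfun P k
  rw [slice_eq, if_pos (by omega)]
  have h2 : tfun P ((k:ℤ) - P.conj 0) - 1 - (tfun P ((k:ℤ) - P.conj 0) - 1 - i) + k
      - P.conj 0 = j := by omega
  have h1 : tfun P ((k:ℤ) - P.conj 0) - 1 - (tfun P ((k:ℤ) - P.conj 0) - 1 - i) = i := by
    omega
  rw [h2, h1]

lemma volume_slices (Λ : RPP P) :
    Λ.volume = ∑ k ∈ Finset.range (P.part 0 + P.conj 0 + 1), (toSeqPart P Λ k).size := by
  classical
  have hrow : ∀ i : ℕ, ∑ᶠ j, Λ.entry i j = ∑ j ∈ Finset.range (P.part 0), Λ.entry i j := by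
    intro i
    refine finsum_eq_sum_of_support_subset _ ?_
    intro j hj
    simp only [Function.mem_support] at hj
    have h1 : j < P.part i := by
      by_contra h
      exact hj (Λ.zero_outside i j (by omega))
    have h2 := P.antitone (Nat.zero_le i)
    simp only [Finset.coe_range, Set.mem_Iio]
    omega
  have hvol : Λ.volume
      = ∑ i ∈ Finset.range (P.conj 0), ∑ j ∈ Finset.range (P.part 0), Λ.entry i j := by
    unfold RPP.volume
    rw [finsum_eq_sum_of_support_subset _ (s := Finset.range (P.conj 0)) ?_]
    · exact Finset.sum_congr rfl fun i _ => hrow i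
    · intro i hi
      simp only [Function.mem_support] at hi
      simp only [Finset.coe_range, Set.mem_Iio]
      by_contra h
      have hp0 : P.part i = 0 := by
        have := part_pos_iff P i
        omega
      apply hi
      have hz : ∀ j : ℕ, Λ.entry i j = 0 := fun j => Λ.zero_outside i j (by omega)
      calc ∑ᶠ j, Λ.entry i j = ∑ᶠ _ : ℕ, (0:ℕ) := finsum_congr hz
        _ = 0 := finsum_zero
  have hsize : ∀ k, (toSeqPart P Λ k).size = ∑ m ∈ Finset.range (P.conj 0), Λ.slice k m := by
    intro k
    show ∑ᶠ m, Λ.slice k m = _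
    refine finsum_eq_sum_of_support_subset _ ?_
    intro m hm
    simp only [Function.mem_support] at hm
    simp only [Finset.coe_range, Set.mem_Iio]
    by_contra h
    apply hm
    have h1 := tfun_le_r P k
    rw [slice_eq, if_neg (by omega)]
  rw [hvol]
  simp only [hsize]
  rw [← Finset.sum_product', ← Finset.sum_product']
  rw [← Finset.sum_filter_of_ne (p := fun p : ℕ × ℕ => p.2 < P.part p.1)
      (fun x _ hfx => by
        by_contra h
        exact hfx (Λ.zero_outside x.1 x.2 (by omega)))]
  rw [← Finset.sum_filter_of_ne
      (s := Finset.range (P.part 0 + P.conj 0 + 1) ×ˢ Finset.range (P.conj 0))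
      (f := fun q : ℕ × ℕ => Λ.slice q.1 q.2)
      (p := fun q : ℕ × ℕ => q.2 < tfun P ((q.1:ℤ) - P.conj 0) - (P.conj 0 - q.1))
      (fun x _ hfx => by
        by_contra h
        rw [slice_eq, if_neg h] at hfx
        exact hfx rfl)]
  refine Finset.sum_nbij'
    (fun p => (p.2 + (P.conj 0 - p.1),
      tfun P ((((p.2 + (P.conj 0 - p.1)) : ℕ) : ℤ) - P.conj 0) - 1 - p.1))
    (fun q => (tfun P ((q.1:ℤ) - P.conj 0) - 1 - q.2,
      tfun P ((q.1:ℤ) - P.conj 0) - 1 - q.2 + q.1 - P.conj 0)) ?_ ?_ ?_ ?_ ?_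
  · rintro ⟨i, j⟩ hp
    simp only [Finset.mem_filter, Finset.mem_product, Finset.mem_range] at hp ⊢
    have hit : i < tfun P ((((j + (P.conj 0 - i)) : ℕ) : ℤ) - P.conj 0) :=
      lt_tfun_of_part (by omega) (by omega)
    have hle := tfun_le_r P (j + (P.conj 0 - i))
    have hbt := base_le_tfun P (j + (P.conj 0 - i))
    omega
  · rintro ⟨k, m⟩ hq
    simp only [Finset.mem_filter, Finset.mem_product, Finset.mem_range] at hq ⊢
    have hbt := base_le_tfun P k
    have hpg : tfun P ((k:ℤ) - P.conj 0) - 1 - m + k - P.conj 0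
        < P.part (tfun P ((k:ℤ) - P.conj 0) - 1 - m) := part_gt (by omega) (by omega)
    have hir : tfun P ((k:ℤ) - P.conj 0) - 1 - m < P.conj 0 :=
      (part_pos_iff P _).1 (by omega)
    have ha := P.antitone (Nat.zero_le (tfun P ((k:ℤ) - P.conj 0) - 1 - m))
    omega
  · rintro ⟨i, j⟩ hp
    simp only [Finset.mem_filter, Finset.mem_product, Finset.mem_range] at hp
    have hit : i < tfun P ((((j + (P.conj 0 - i)) : ℕ) : ℤ) - P.conj 0) :=
      lt_tfun_of_part (by omega) (by omega)
    dsimp only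
    simp only [Prod.mk.injEq]
    constructor <;> omega
  · rintro ⟨k, m⟩ hq
    simp only [Finset.mem_filter, Finset.mem_product, Finset.mem_range] at hq
    have hbt := base_le_tfun P k
    have hpg : tfun P ((k:ℤ) - P.conj 0) - 1 - m + k - P.conj 0
        < P.part (tfun P ((k:ℤ) - P.conj 0) - 1 - m) := part_gt (by omega) (by omega)
    have hir : tfun P ((k:ℤ) - P.conj 0) - 1 - m < P.conj 0 :=
      (part_pos_iff P _).1 (by omega)
    have hk' : tfun P ((k:ℤ) - P.conj 0) - 1 - m + k - P.conj 0
        + (P.conj 0 - (tfun P ((k:ℤ) - P.conj 0) - 1 - m)) = k := by omega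
    dsimp only
    rw [hk']
    simp only [Prod.mk.injEq]
    exact ⟨trivial, by omega⟩
  · rintro ⟨i, j⟩ hp
    simp only [Finset.mem_filter, Finset.mem_product, Finset.mem_range] at hp
    exact (slice_entry P Λ hp.2).symm

end Aux6

/-- Reverse plane partitions of shape λ are in bijection with sequences of
partitions interlacing according to the Maya diagram of λ; the bijection reads the
entries of the filling along diagonals (vertical slices in Russian convention) from
left to right, and the volume of the RPP is the sum of the sizes of the slices. -/
theorem rpp_interlacing_sequence_bijection (P : IntPartition) :
    ∃ F : RPP P ≃ {f : ℕ → IntPartition // InterlacingSeq P f},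
      ∀ Λ : RPP P,
        (∀ k m, ((F Λ).val k).part m = Λ.slice k m) ∧
        Λ.volume = ∑ k ∈ Finset.range (P.part 0 + P.conj 0 + 1),
          ((F Λ).val k).size := by
  refine ⟨{
    toFun := fun Λ => ⟨fun k => toSeqPart P Λ k, toSeq_interlacing P Λ⟩
    invFun := fun f => fromSeq P f.2
    left_inv := fun Λ => fromSeq_toSeq P Λ
    right_inv := fun f => ?_ }, fun Λ => ⟨fun k m => rfl, volume_slices P Λ⟩⟩
  apply Subtype.ext
  funext k
  apply IntPartition.ext'
  intro m
  exact slice_fromSeq P f.2 k m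
end

section
/- Shifting the i-th border strip of a partition λ down and to the left by one step (i.e., mapping each cell (r,c) to (r-1,c-1)) and discarding cells that leave the Young diagram yields exactly the (i+1)-th border strip of λ. -/
/-- Removing the outermost border strip from a partition: the remaining cells are
exactly those (i,j) with (i+1,j+1) still in the diagram, so the new row lengths are
λ_{i+1} - 1. -/
def removeStrip (P : IntPartition) : IntPartition where
  part i := P.part (i + 1) - 1
  antitone := fun i j h => Nat.sub_le_sub_right (P.antitone (Nat.succ_le_succ h)) 1
  eventually_zero := by
    obtain ⟨N, hN⟩ := P.eventually_zero
    exact ⟨N, fun i hi => by simp only [hN (i + 1) (by omega)]⟩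

/-- The outermost border strip of a partition: the cells (i,j) of the diagram with
(i+1,j+1) not in the diagram. -/
def firstStrip (P : IntPartition) (i j : ℕ) : Prop :=
  j < P.part i ∧ ¬ (j + 1 < P.part (i + 1))

/-- The s-th border strip of λ (s ≥ 1, from outermost to innermost): the outermost
border strip of the partition obtained by removing the first s-1 border strips. -/
def strip (P : IntPartition) (s : ℕ) (i j : ℕ) : Prop :=
  firstStrip (removeStrip^[s - 1] P) i j

/-- Shifting the s-th border strip of λ down and to the left by one step (each cell
(r,c) ↦ (r-1,c-1)), discarding the cells that leave the Young diagram, yields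
exactly the (s+1)-th border strip: a cell (i,j) lies in the (s+1)-th strip iff
(i+1,j+1) lies in the s-th strip. -/
theorem strip_shift (P : IntPartition) (s : ℕ) (hs : 1 ≤ s) (i j : ℕ) :
    strip P (s + 1) i j ↔ strip P s (i + 1) (j + 1) := by
  unfold strip
  have h : s + 1 - 1 = (s - 1) + 1 := by omega
  rw [h, Function.iterate_succ_apply']
  set Q := removeStrip^[s - 1] P
  simp only [firstStrip, removeStrip]
  omega
end
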